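/- Let m > 2, l ≥ 2, and t ≥ 1 be integers, n = m + l, and let B_1, …, B_t be nonempty subsets of {1, …, l}. Then the binary linear code C(D) is a minimal code, i.e., every nonzero codeword of C(D) is minimal. -/
import Mathlib


/-- Dot product on `F_2^m × F_2^l ≅ F_2^n` (`n = m + l`). -/
def dotp {m l : ℕ} (x d : (Fin m → ZMod 2) × (Fin l → ZMod 2)) : ZMod 2 :=
  (∑ j, x.1 j * d.1 j) + (∑ j, x.2 j * d.2 j)

/-- `D_0 = {(β, γ) : β ≠ (1,…,1), γ ≠ 0}`. -/
def D0 (m l : ℕ) : Set ((Fin m → ZMod 2) × (Fin l → ZMod 2)) :=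
  {d | d.1 ≠ (fun _ => 1) ∧ d.2 ≠ 0}

/-- The binary code `C(D)` with defining set `D` is minimal: for every `x` with
`c(x) ≠ 0` and every `x'` with `Suppt(c(x')) ⊆ Suppt(c(x))`, the codeword
`c(x')` equals `0` or `c(x)` (coordinatewise over `D`). -/
def IsMinimalCode {m l : ℕ} (D : Set ((Fin m → ZMod 2) × (Fin l → ZMod 2))) : Prop :=
  ∀ x : (Fin m → ZMod 2) × (Fin l → ZMod 2),
    (∃ d ∈ D, dotp x d ≠ 0) →
    ∀ x' : (Fin m → ZMod 2) × (Fin l → ZMod 2),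
      (∀ d ∈ D, dotp x' d ≠ 0 → dotp x d ≠ 0) →
      ((∀ d ∈ D, dotp x' d = 0) ∨ (∀ d ∈ D, dotp x' d = dotp x d))

/-- `D_1 = {((1,…,1), γ) : Suppt(γ) ⊄ B_i for every i}`. -/
def D1 (m : ℕ) {l t : ℕ} (B : Fin t → Finset (Fin l)) :
    Set ((Fin m → ZMod 2) × (Fin l → ZMod 2)) :=
  {d | d.1 = (fun _ => 1) ∧ ∀ i : Fin t, ¬ ({j | d.2 j ≠ 0} ⊆ ↑(B i))}



lemma zmod2_cases (x : ZMod 2) : x = 0 ∨ x = 1 := by revert x; decide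

lemma sum_if_two {m : ℕ} (a : Fin m → ZMod 2) (i j : Fin m) (hij : i ≠ j) (u v : ZMod 2) :
    ∑ k, a k * (if k = i then u else if k = j then v else 0) = a i * u + a j * v := by
  rw [← Finset.sum_subset (Finset.subset_univ ({i, j} : Finset (Fin m)))]
  · rw [Finset.sum_pair hij]
    simp [hij, hij.symm]
  · intro k _ hk
    simp only [Finset.mem_insert, Finset.mem_singleton, not_or] at hk
    simp [hk.1, hk.2]

lemma sum_if_one {m : ℕ} (a : Fin m → ZMod 2) (i : Fin m) (u : ZMod 2) :
    ∑ k, a k * (if k = i then u else 0) = a i * u := by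
  simp [mul_ite, Finset.sum_ite_eq']

lemma hone : ∀ z : ZMod 2, z ≠ 0 → z = 1 := by decide

lemma ne_zero_exists {m : ℕ} (a : Fin m → ZMod 2) (ha : a ≠ 0) : ∃ i, a i = 1 := by
  obtain ⟨i, hi⟩ := Function.ne_iff.mp ha
  exact ⟨i, hone _ (by simpa using hi)⟩

lemma exists_third {m : ℕ} (hm : 2 < m) (i j : Fin m) : ∃ k : Fin m, k ≠ i ∧ k ≠ j := by
  by_contra h
  push_neg at h
  have hsub : (Finset.univ : Finset (Fin m)) ⊆ {i, j} := by
    intro k _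
    simp only [Finset.mem_insert, Finset.mem_singleton]
    rcases eq_or_ne k i with h1 | h1
    · exact Or.inl h1
    · exact Or.inr (h k h1)
  have hc := Finset.card_le_card hsub
  have h2 : ({i, j} : Finset (Fin m)).card ≤ 2 :=
    (Finset.card_insert_le _ _).trans (by simp)
  simp [Finset.card_univ] at hc
  omega

lemma exists_single_sol {m : ℕ} (hm : 2 ≤ m) (a : Fin m → ZMod 2) (ha : a ≠ 0) (c : ZMod 2) :
    ∃ β : Fin m → ZMod 2, β ≠ (fun _ => 1) ∧ ∑ k, a k * β k = c := by
  obtain ⟨i, hi1⟩ := ne_zero_exists a ha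
  refine ⟨fun k => if k = i then c else 0, ?_, ?_⟩
  · obtain ⟨j, hj⟩ := Fintype.exists_ne_of_one_lt_card (by simp; omega) i
    intro h
    have := congrFun h j
    simp [hj] at this
  · rw [sum_if_one, hi1, one_mul]

lemma exists_gamma {l : ℕ} (hl : 2 ≤ l) (b : Fin l → ZMod 2) (hb : b ≠ 0) (c : ZMod 2) :
    ∃ γ : Fin l → ZMod 2, γ ≠ 0 ∧ ∑ k, b k * γ k = c := by
  obtain ⟨i, hi1⟩ := ne_zero_exists b hb
  obtain ⟨j, hj⟩ := Fintype.exists_ne_of_one_lt_card (by simp; omega) i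
  refine ⟨fun k => if k = i then (c + b j) else if k = j then 1 else 0, ?_, ?_⟩
  · intro h
    have := congrFun h j
    simp [hj] at this
  · rw [sum_if_two b i j (Ne.symm hj), hi1, one_mul, mul_one]
    have : ∀ u v : ZMod 2, (v + u) + u = v := by decide
    exact this (b j) c

lemma exists_two_sol_aux {m : ℕ} (a a' : Fin m → ZMod 2) (i : Fin m) (hi : a i = 1)
    (hi' : a' i = 0) (j : Fin m) (hj : a' j = 1) (c c' : ZMod 2) :
    ∃ (β : Fin m → ZMod 2) (i₀ j₀ : Fin m), i₀ ≠ j₀ ∧ (∀ k, k ≠ i₀ → k ≠ j₀ → β k = 0) ∧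
      ∑ k, a k * β k = c ∧ ∑ k, a' k * β k = c' := by
  have hij : i ≠ j := by intro h; rw [h, hj] at hi'; exact one_ne_zero hi'
  refine ⟨fun k => if k = i then (c + c' * a j) else if k = j then c' else 0, i, j, hij,
    fun k h1 h2 => by simp [h1, h2], ?_, ?_⟩
  · rw [sum_if_two a i j hij, hi, one_mul]
    have : ∀ u v w : ZMod 2, (u + v * w) + w * v = u := by decide
    exact this c c' (a j)
  · rw [sum_if_two a' i j hij, hi', hj, zero_mul, one_mul, zero_add]

lemma exists_two_sol {m : ℕ} (a a' : Fin m → ZMod 2) (ha : a ≠ 0) (ha' : a' ≠ 0)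
    (hne : a ≠ a') (c c' : ZMod 2) :
    ∃ (β : Fin m → ZMod 2) (i₀ j₀ : Fin m), i₀ ≠ j₀ ∧ (∀ k, k ≠ i₀ → k ≠ j₀ → β k = 0) ∧
      ∑ k, a k * β k = c ∧ ∑ k, a' k * β k = c' := by
  obtain ⟨i, hi⟩ := Function.ne_iff.mp hne
  rcases zmod2_cases (a i) with h | h
  · -- a i = 0, a' i = 1
    have h' : a' i = 1 := by
      apply hone
      rw [h] at hi
      exact Ne.symm hi
    obtain ⟨j, hj⟩ := ne_zero_exists a ha
    obtain ⟨β, i₀, j₀, h1, h2, h3, h4⟩ :=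
      exists_two_sol_aux a' a i h' h j hj c' c
    exact ⟨β, i₀, j₀, h1, h2, h4, h3⟩
  · -- a i = 1, a' i = 0
    have h' : a' i = 0 := by
      rcases zmod2_cases (a' i) with hh | hh
      · exact hh
      · rw [h, hh] at hi; exact absurd rfl hi
    obtain ⟨j, hj⟩ := ne_zero_exists a' ha'
    exact exists_two_sol_aux a a' i h h' j hj c c'
lemma core_lemma {m l : ℕ} (hm : 2 < m) (hl : 2 ≤ l)
    (x x' : (Fin m → ZMod 2) × (Fin l → ZMod 2))
    (hx : x ≠ 0) (hx' : x' ≠ 0) (hne : x ≠ x') :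
    ∃ d ∈ D0 m l, dotp x d = 0 ∧ dotp x' d = 1 := by
  obtain ⟨a, b⟩ := x
  obtain ⟨a', b'⟩ := x'
  have hm2 : 2 ≤ m := le_of_lt hm
  have hm0 : (0 : ℕ) < m := by omega
  have hl0 : (0 : ℕ) < l := by omega
  have hadd : ∀ z : ZMod 2, z + z = 0 := by decide
  by_cases ha : a = 0
  · have hb : b ≠ 0 := by
      intro h
      exact hx (by rw [ha, h]; rfl)
    by_cases ha' : a' = 0
    · have hb' : b' ≠ 0 := by
        intro h
        exact hx' (by rw [ha', h]; rfl)
      have hbb' : b ≠ b' := by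
        intro h
        exact hne (by rw [ha, ha', h])
      obtain ⟨γ, i₀, j₀, h1, h2, h3, h4⟩ := exists_two_sol b b' hb hb' hbb' 0 1
      have hγ : γ ≠ 0 := by
        rintro rfl
        simp at h4
      refine ⟨(0, γ), ⟨?_, hγ⟩, ?_, ?_⟩
      · intro h
        have := congrFun h ⟨0, hm0⟩
        simp at this
      · show (∑ k, a k * (0 : Fin m → ZMod 2) k) + (∑ k, b k * γ k) = 0
        simp [h3]
      · show (∑ k, a' k * (0 : Fin m → ZMod 2) k) + (∑ k, b' k * γ k) = 1
        simp [h4]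
    · obtain ⟨γ, hγ, hγs⟩ := exists_gamma hl b hb 0
      obtain ⟨β, hβ, hβs⟩ := exists_single_sol hm2 a' ha' (1 + ∑ k, b' k * γ k)
      refine ⟨(β, γ), ⟨hβ, hγ⟩, ?_, ?_⟩
      · show (∑ k, a k * β k) + (∑ k, b k * γ k) = 0
        simp [ha, hγs]
      · show (∑ k, a' k * β k) + (∑ k, b' k * γ k) = 1
        rw [hβs, add_assoc, hadd, add_zero]
  · by_cases ha' : a' = 0
    · have hb' : b' ≠ 0 := by
        intro h
        exact hx' (by rw [ha', h]; rfl)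
      obtain ⟨γ, hγ, hγs⟩ := exists_gamma hl b' hb' 1
      obtain ⟨β, hβ, hβs⟩ := exists_single_sol hm2 a ha (∑ k, b k * γ k)
      refine ⟨(β, γ), ⟨hβ, hγ⟩, ?_, ?_⟩
      · show (∑ k, a k * β k) + (∑ k, b k * γ k) = 0
        rw [hβs, hadd]
      · show (∑ k, a' k * β k) + (∑ k, b' k * γ k) = 1
        simp [ha', hγs]
    · by_cases haa : a = a'
      · have hbb' : b ≠ b' := by
          intro h
          exact hne (by rw [haa, h])
        have hsumne : b + b' ≠ 0 := by
          intro h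
          apply hbb'
          funext k
          have hk := congrFun h k
          have h2' : ∀ u v : ZMod 2, u + v = 0 → u = v := by decide
          exact h2' _ _ hk
        obtain ⟨γ, hγ, hγs⟩ := exists_gamma hl (b + b') hsumne 1
        obtain ⟨β, hβ, hβs⟩ := exists_single_sol hm2 a ha (∑ k, b k * γ k)
        have hsplit : ∑ k, (b + b') k * γ k = (∑ k, b k * γ k) + ∑ k, b' k * γ k := by
          rw [← Finset.sum_add_distrib]
          apply Finset.sum_congr rfl
          intro k _
          simp [add_mul]
        refine ⟨(β, γ), ⟨hβ, hγ⟩, ?_, ?_⟩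
        · show (∑ k, a k * β k) + (∑ k, b k * γ k) = 0
          rw [hβs, hadd]
        · show (∑ k, a' k * β k) + (∑ k, b' k * γ k) = 1
          rw [← haa, hβs, ← hsplit, hγs]
      · obtain ⟨β, i₀, j₀, h1, h2, h3, h4⟩ :=
          exists_two_sol a a' ha ha' haa
            (∑ k, b k * (fun k' : Fin l => if k' = ⟨0, hl0⟩ then (1 : ZMod 2) else 0) k)
            (1 + ∑ k, b' k * (fun k' : Fin l => if k' = ⟨0, hl0⟩ then (1 : ZMod 2) else 0) k)
        obtain ⟨k₀, hk1, hk2⟩ := exists_third hm i₀ j₀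
        refine ⟨(β, fun k' : Fin l => if k' = ⟨0, hl0⟩ then (1 : ZMod 2) else 0),
          ⟨?_, ?_⟩, ?_, ?_⟩
        · intro h
          have hthis : β k₀ = 1 := congrFun h k₀
          rw [h2 k₀ hk1 hk2] at hthis
          exact zero_ne_one hthis
        · intro h
          have := congrFun h ⟨0, hl0⟩
          simp at this
        · show (∑ k, a k * β k) +
            (∑ k, b k * (fun k' : Fin l => if k' = ⟨0, hl0⟩ then (1 : ZMod 2) else 0) k) = 0
          rw [h3, hadd]
        · show (∑ k, a' k * β k) +
            (∑ k, b' k * (fun k' : Fin l => if k' = ⟨0, hl0⟩ then (1 : ZMod 2) else 0) k) = 1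
          rw [h4, add_assoc, hadd, add_zero]

/-- For `m > 2`, `l ≥ 2`, `t ≥ 1` and nonempty `B_1, …, B_t ⊆ {1,…,l}`,
the binary code `C(D)`, `D = D_0 ∪ D_1`, is minimal. -/
theorem D_minimal_of_two_lt (m l t : ℕ) (hm : 2 < m) (hl : 2 ≤ l) (ht : 1 ≤ t)
    (B : Fin t → Finset (Fin l)) (hB : ∀ i, (B i).Nonempty) :
    IsMinimalCode (D0 m l ∪ D1 m B) := by
  intro x hx x' hcov
  by_cases h0 : ∀ d ∈ D0 m l ∪ D1 m B, dotp x' d = 0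
  · exact Or.inl h0
  · right
    have hx0 : x ≠ 0 := by
      rintro rfl
      obtain ⟨d, _, hd⟩ := hx
      exact hd (by simp [dotp])
    have hx'0 : x' ≠ 0 := by
      rintro rfl
      exact h0 fun d _ => by simp [dotp]
    by_cases hxx : x = x'
    · subst hxx
      intro d _
      rfl
    · exfalso
      obtain ⟨d, hd, hf, hg⟩ := core_lemma hm hl x x' hx0 hx'0 hxx
      exact hcov d (Or.inl hd) (by rw [hg]; exact one_ne_zero) hf
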